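/- arXiv:2010.05331 — 6 statements merged into one kernel-verified Lean document; each statement's English description precedes it below -/
import Mathlib

section
/- The coefficients of the polynomial ∏_{ℓ=1}^m (1 + q + ... + q^{a_ℓ}) are unimodal: writing the polynomial as ∑_{i=0}^N c_i q^i with N = a_1+...+a_m, we have c_0 ≤ c_1 ≤ ... ≤ c_{⌊N/2⌋} and c_{⌈N/2⌉} ≥ ... ≥ c_N. -/
/-!
Multiplying by `1 + q + ⋯ + q^a` replaces a coefficient sequence `f` by its moving sum
`g k = f k + f (k - 1) + ⋯ + f (k - a)`. If `f` is symmetric about `n / 2` and unimodal, then `g`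
is symmetric about `(n + a) / 2`, and its increments `g (i + 1) - g i = f (i + 1) - f (i - a)`
are nonnegative up to the middle because `i + 1` lies at least as close to the centre `n / 2`
as `i - a` does. Induction on the number of factors, starting from the constant `1`.
-/

open Polynomial Finset

variable {α : Type*}

structure IsSymmUnimodal [Preorder α] (f : ℤ → α) (n : ℤ) : Prop where
  symm : ∀ k, f (n - k) = f k
  monotoneOn : MonotoneOn f (Set.Iic (n / 2))

namespace IsSymmUnimodal

variable [Preorder α] {f : ℤ → α} {n : ℤ}

theorem le_of_add_le (hf : IsSymmUnimodal f n) {j k : ℤ} (hjk : j ≤ k) (hn : j + k ≤ n) :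
    f j ≤ f k := by
  by_cases hk : k ≤ n / 2
  · exact hf.monotoneOn (Set.mem_Iic.2 (by omega)) hk hjk
  · rw [← hf.symm k]
    exact hf.monotoneOn (Set.mem_Iic.2 (by omega)) (Set.mem_Iic.2 (by omega)) (by omega)

theorem le_of_le_add (hf : IsSymmUnimodal f n) {j k : ℤ} (hjk : j ≤ k) (hn : n ≤ j + k) :
    f k ≤ f j := by
  rw [← hf.symm j, ← hf.symm k]
  exact hf.le_of_add_le (by omega) (by omega)

end IsSymmUnimodal

section BoxSum

variable [AddCommMonoid α]

def boxSum (a : ℕ) (f : ℤ → α) (k : ℤ) : α := ∑ t ∈ range (a + 1), f (k - t)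

theorem boxSum_add_one (a : ℕ) (f : ℤ → α) (k : ℤ) :
    boxSum a f (k + 1) = ∑ t ∈ range a, f (k - t) + f (k + 1) := by
  rw [boxSum, sum_range_succ']
  simp only [Nat.cast_add, Nat.cast_one, Nat.cast_zero, sub_zero]
  congr 1
  exact sum_congr rfl fun t _ => by ring_nf

theorem boxSum_eq_add (a : ℕ) (f : ℤ → α) (k : ℤ) :
    boxSum a f k = ∑ t ∈ range a, f (k - t) + f (k - a) :=
  sum_range_succ _ _

theorem IsSymmUnimodal.boxSum [PartialOrder α] [IsOrderedAddMonoid α] {f : ℤ → α} {n : ℤ}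
    (hf : IsSymmUnimodal f n) (a : ℕ) :
    IsSymmUnimodal (boxSum a f) (n + a) where
  symm k := by
    unfold _root_.boxSum
    rw [← sum_range_reflect]
    refine sum_congr rfl fun t ht => ?_
    rw [← hf.symm]
    congr 1
    have := mem_range.1 ht
    push_cast [Nat.sub_sub, Nat.add_sub_cancel, show t ≤ a by omega]
    ring
  monotoneOn := by
    refine monotoneOn_of_le_succ Set.ordConnected_Iic fun i _ _ hi => ?_
    rw [Order.succ_eq_add_one] at hi ⊢
    rw [boxSum_add_one, boxSum_eq_add]
    exact add_le_add_right (hf.le_of_add_le (by omega) (by rw [Set.mem_Iic] at hi; omega)) _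

end BoxSum

section Polynomial

variable {R : Type*}

/-- Coefficients extended by zero to negative indices, so that shifts `k ↦ k - t` and
reflections `k ↦ n - k` need no truncated subtraction. -/
def coeffOnInt [Semiring R] (P : R[X]) (k : ℤ) : R :=
  if 0 ≤ k then P.coeff k.toNat else 0

@[simp]
theorem coeffOnInt_natCast [Semiring R] (P : R[X]) (i : ℕ) : coeffOnInt P i = P.coeff i := by
  simp [coeffOnInt]

theorem coeffOnInt_mul_X_pow [Semiring R] (P : R[X]) (t : ℕ) (k : ℤ) :
    coeffOnInt (P * X ^ t) k = coeffOnInt P (k - t) := by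
  unfold coeffOnInt
  rw [coeff_mul_X_pow']
  split_ifs <;> first | rfl | omega | (congr 1; omega)

theorem coeffOnInt_mul_geom [Semiring R] (P : R[X]) (a : ℕ) :
    coeffOnInt (P * ∑ t ∈ range (a + 1), X ^ t) = boxSum a (coeffOnInt P) := by
  funext k
  simp only [boxSum, ← coeffOnInt_mul_X_pow, mul_sum]
  unfold coeffOnInt
  split_ifs <;> simp [finsetSum_coeff]

theorem isSymmUnimodal_coeffOnInt_one [Semiring R] [PartialOrder R] [IsOrderedAddMonoid R]
    [ZeroLEOneClass R] : IsSymmUnimodal (coeffOnInt (1 : R[X])) 0 where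
  symm k := by simp only [coeffOnInt, coeff_one]; split_ifs <;> first | rfl | omega
  monotoneOn j hj k hk hjk := by
    simp only [Set.mem_Iic] at hj hk
    simp only [coeffOnInt, coeff_one]
    split_ifs <;> first | rfl | exact zero_le_one | omega

theorem isSymmUnimodal_coeffOnInt_prod_geom [CommSemiring R] [PartialOrder R] [IsOrderedRing R]
    {ι : Type*} (s : Finset ι) (a : ι → ℕ) :
    IsSymmUnimodal (coeffOnInt (∏ ℓ ∈ s, ∑ k ∈ range (a ℓ + 1), (X : R[X]) ^ k))
      (∑ ℓ ∈ s, a ℓ : ℕ) := by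
  classical
  induction s using Finset.induction_on with
  | empty => simpa using isSymmUnimodal_coeffOnInt_one
  | insert i s hi ih =>
    rw [prod_insert hi, sum_insert hi, mul_comm, coeffOnInt_mul_geom, Nat.cast_add, add_comm]
    exact ih.boxSum (a i)

end Polynomial

theorem unimodal_coefficients_general (m : ℕ) (a : Fin m → ℕ)
    (N : ℕ) (hN : N = ∑ ℓ, a ℓ)
    (c : ℕ → ℤ)
    (hc : ∀ i, c i =
      (∏ ℓ : Fin m, ∑ k ∈ Finset.range (a ℓ + 1), (Polynomial.X : Polynomial ℤ) ^ k).coeff i) :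
    (∀ i, i + 1 ≤ N / 2 → c i ≤ c (i + 1)) ∧
      (∀ i, (N + 1) / 2 ≤ i → i < N → c (i + 1) ≤ c i) := by
  have h := isSymmUnimodal_coeffOnInt_prod_geom (R := ℤ) univ a
  rw [← hN] at h
  simp only [hc, ← coeffOnInt_natCast, Nat.cast_add, Nat.cast_one]
  exact ⟨fun i hi => h.le_of_add_le (by omega) (by omega),
    fun i hi _ => h.le_of_le_add (by omega) (by omega)⟩

/-- The coefficients of `∏_{ℓ=1}^m (1 + q + ... + q^{a_ℓ})` are unimodal:
writing the polynomial as `∑_{i=0}^N c_i q^i` with `N = a_1 + ... + a_m`, we have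
`c_0 ≤ c_1 ≤ ... ≤ c_{⌊N/2⌋}` and `c_{⌈N/2⌉} ≥ ... ≥ c_N`. -/
theorem unimodal_coefficients (m : ℕ) (a : Fin m → ℕ) (ha : ∀ ℓ, 0 < a ℓ)
    (N : ℕ) (hN : N = ∑ ℓ, a ℓ)
    (c : ℕ → ℤ)
    (hc : ∀ i, c i =
      (∏ ℓ : Fin m, ∑ k ∈ Finset.range (a ℓ + 1), (Polynomial.X : Polynomial ℤ) ^ k).coeff i) :
    (∀ i, i + 1 ≤ N / 2 → c i ≤ c (i + 1)) ∧
      (∀ i, (N + 1) / 2 ≤ i → i < N → c (i + 1) ≤ c i) :=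
  unimodal_coefficients_general m a N hN c hc
end

section
/- For any integer r with 0 ≤ r ≤ N, the number N_m(r; a_1,...,a_m) of ways to write r = x_1 + ... + x_m with 0 ≤ x_i ≤ a_i is at most N_m(⌊N/2⌋; a_1,...,a_m), where N = a_1 + ... + a_m. -/
/-!
The counts `c r` are the coefficients of `∏ i, (1 + q + ⋯ + q ^ a i)`. The reflection
`x ↦ a - x` of the box makes `c` symmetric about `N / 2`. Adding a coordinate with bound `b`
replaces `c` by its sliding-window sums `∑ s ∈ [r - b, r], c s`, and moving the window one step
to the right trades `c (r - b)` for `c (r + 1)`. Before the new centre, `r + 1` is closer to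
the old centre than `r - b`, so symmetry and unimodality of `c` give `c (r - b) ≤ c (r + 1)`.
By induction on the number of coordinates, `c` is symmetric and unimodal, hence maximal at
`N / 2`.
-/

open Finset

section BoxSlice

variable {ι : Type*} [Fintype ι] [DecidableEq ι]

def boxSlice (a : ι → ℕ) (r : ℕ) : Finset (ι → ℕ) :=
  {x ∈ Fintype.piFinset fun i => Iic (a i) | ∑ i, x i = r}

@[simp]
theorem mem_boxSlice {a x : ι → ℕ} {r : ℕ} :
    x ∈ boxSlice a r ↔ (∀ i, x i ≤ a i) ∧ ∑ i, x i = r := by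
  simp only [boxSlice, mem_filter, Fintype.mem_piFinset, mem_Iic]

theorem ncard_setOf_eq_card_boxSlice (a : ι → ℕ) (r : ℕ) :
    {x : ι → ℕ | (∀ i, x i ≤ a i) ∧ ∑ i, x i = r}.ncard = #(boxSlice a r) := by
  rw [← Set.ncard_coe_finset]
  congr 1
  ext x
  simp

theorem card_boxSlice_sum_sub (a : ι → ℕ) {r : ℕ} (hr : r ≤ ∑ i, a i) :
    #(boxSlice a (∑ i, a i - r)) = #(boxSlice a r) := by
  have sum_compl {x : ι → ℕ} (hx : ∀ i, x i ≤ a i) : ∑ i, (a i - x i) = ∑ i, a i - ∑ i, x i :=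
    sum_tsub_distrib _ fun i _ => hx i
  have compl_compl {x : ι → ℕ} (hx : ∀ i, x i ≤ a i) : (fun i => a i - (a i - x i)) = x :=
    funext fun i => Nat.sub_sub_self (hx i)
  refine card_nbij' (fun x i => a i - x i) (fun x i => a i - x i) ?_ ?_ ?_ ?_
  · intro x hx
    rw [mem_coe, mem_boxSlice] at hx ⊢
    refine ⟨fun i => Nat.sub_le _ _, ?_⟩
    rw [sum_compl hx.1, hx.2]
    omega
  · intro x hx
    rw [mem_coe, mem_boxSlice] at hx ⊢
    exact ⟨fun i => Nat.sub_le _ _, by rw [sum_compl hx.1, hx.2]⟩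
  · exact fun x hx => compl_compl (mem_boxSlice.1 hx).1
  · exact fun x hx => compl_compl (mem_boxSlice.1 hx).1

end BoxSlice

theorem card_boxSlice_succ {m : ℕ} (a : Fin (m + 1) → ℕ) (r : ℕ) :
    #(boxSlice a r) = ∑ s ∈ Icc (r - a (Fin.last m)) r, #(boxSlice (Fin.init a) s) := by
  rw [card_eq_sum_card_fiberwise (f := fun x => ∑ i, Fin.init x i)]
  · refine sum_congr rfl fun s hs => ?_
    rw [mem_Icc] at hs
    refine card_nbij' Fin.init (fun y => Fin.snoc y (r - s)) ?_ ?_ ?_ ?_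
    · intro x hx
      simp only [coe_filter, mem_boxSlice, Set.mem_ofPred_eq, mem_coe] at hx ⊢
      exact ⟨fun i => hx.1.1 i.castSucc, hx.2⟩
    · intro y hy
      simp only [coe_filter, mem_boxSlice, Set.mem_ofPred_eq, mem_coe, Fin.forall_fin_succ',
        Fin.snoc_castSucc, Fin.snoc_last, Fin.sum_univ_castSucc, Fin.init_snoc] at hy ⊢
      exact ⟨⟨⟨hy.1, by omega⟩, by omega⟩, hy.2⟩
    · intro x hx
      simp only [coe_filter, mem_boxSlice, Set.mem_ofPred_eq, Fin.sum_univ_castSucc] at hx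
      obtain ⟨⟨-, rfl⟩, rfl⟩ := hx
      simp only [Fin.init, Nat.add_sub_cancel_left]
      exact Fin.snoc_init_self x
    · intro y hy
      exact Fin.init_snoc _ _
  · intro x hx
    rw [mem_coe, mem_boxSlice, Fin.sum_univ_castSucc] at hx
    have := hx.1 (Fin.last m)
    simp only [coe_Icc, Set.mem_Icc, Fin.init]
    omega

structure IsSymmUnimodal_s2 (f : ℕ → ℕ) (N : ℕ) : Prop where
  symm : ∀ r ≤ N, f (N - r) = f r
  monotoneOn : MonotoneOn f (Set.Iic (N / 2))

namespace IsSymmUnimodal_s2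

variable {f : ℕ → ℕ} {N : ℕ}

theorem le_of_add_le_s2 (hf : IsSymmUnimodal_s2 f N) {x y : ℕ} (hxy : x ≤ y) (hN : x + y ≤ N) :
    f x ≤ f y := by
  rcases le_or_gt y (N / 2) with hy | hy
  · exact hf.monotoneOn (Set.mem_Iic.2 (hxy.trans hy)) hy hxy
  · rw [← hf.symm y (by omega)]
    exact hf.monotoneOn (Set.mem_Iic.2 (by omega)) (Set.mem_Iic.2 (by omega)) (by omega)

theorem le_half (hf : IsSymmUnimodal_s2 f N) {r : ℕ} (hr : r ≤ N) : f r ≤ f (N / 2) := by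
  rcases le_or_gt r (N / 2) with h | h
  · exact hf.le_of_add_le_s2 h (by omega)
  · rw [← hf.symm r hr]
    exact hf.le_of_add_le_s2 (by omega) (by omega)

theorem monotoneOn_sum_Icc (hf : IsSymmUnimodal_s2 f N) (b : ℕ) :
    MonotoneOn (fun r => ∑ s ∈ Icc (r - b) r, f s) (Set.Iic ((N + b) / 2)) := by
  refine monotoneOn_of_le_succ Set.ordConnected_Iic fun r _ _ hr => ?_
  rw [Order.succ_eq_add_one, Set.mem_Iic] at hr
  rw [Order.succ_eq_add_one]
  rcases lt_or_ge r b with hrb | hbr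
  · rw [show r + 1 - b = r - b by omega, sum_Icc_succ_top (by omega)]
    exact Nat.le_add_right _ _
  · have key : f (r - b) ≤ f (r + 1) := hf.le_of_add_le_s2 (by omega) (by omega)
    rw [← Ioc_insert_left (by omega : r - b ≤ r), sum_insert left_notMem_Ioc,
      show r + 1 - b = r - b + 1 by omega, sum_Icc_succ_top (by omega), Icc_add_one_left_eq_Ioc]
    omega

end IsSymmUnimodal_s2

theorem isSymmUnimodal_card_boxSlice {m : ℕ} (a : Fin m → ℕ) :
    IsSymmUnimodal_s2 (fun r => #(boxSlice a r)) (∑ i, a i) := by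
  induction m with
  | zero =>
    refine ⟨fun r hr => card_boxSlice_sum_sub a hr, Set.Subsingleton.monotoneOn _ ?_⟩
    simp [Set.Subsingleton]
  | succ m ih =>
    refine ⟨fun r hr => card_boxSlice_sum_sub a hr, ?_⟩
    simpa only [card_boxSlice_succ, Fin.sum_univ_castSucc, Fin.init]
      using (ih (Fin.init a)).monotoneOn_sum_Icc (a (Fin.last m))

theorem middle_maximizes_general (m : ℕ) (a : Fin m → ℕ)
    (N : ℕ) (hN : N = ∑ i, a i) (r : ℕ) (hr : r ≤ N) :
    {x : Fin m → ℕ | (∀ i, x i ≤ a i) ∧ ∑ i, x i = r}.ncard ≤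
      {x : Fin m → ℕ | (∀ i, x i ≤ a i) ∧ ∑ i, x i = N / 2}.ncard := by
  rw [ncard_setOf_eq_card_boxSlice, ncard_setOf_eq_card_boxSlice]
  subst hN
  exact (isSymmUnimodal_card_boxSlice a).le_half hr

/-- For any `0 ≤ r ≤ N`, the number `N_m(r; a_1,...,a_m)` of ways to write
`r = x_1 + ... + x_m` with `0 ≤ x_i ≤ a_i` is at most `N_m(⌊N/2⌋; a_1,...,a_m)`,
where `N = a_1 + ... + a_m`. -/
theorem middle_maximizes (m : ℕ) (a : Fin m → ℕ) (ha : ∀ i, 0 < a i)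
    (N : ℕ) (hN : N = ∑ i, a i) (r : ℕ) (hr : r ≤ N) :
    {x : Fin m → ℕ | (∀ i, x i ≤ a i) ∧ ∑ i, x i = r}.ncard ≤
      {x : Fin m → ℕ | (∀ i, x i ≤ a i) ∧ ∑ i, x i = N / 2}.ncard :=
  middle_maximizes_general m a N hN r hr
end

section
/- Among all 2-column margins, the balanced one maximizes the number of contingency tables: for any 0 ≤ r ≤ N, the number of m×2 nonnegative integer matrices with row sums a_1,...,a_m and column sums (r, N−r) is at most the number with column sums (⌊N/2⌋, ⌈N/2⌉). -/
open Finset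

/-!
Writing `x i` for the first-column entry of row `i`, a table with column sums `(k, N - k)` is
the same as a lattice point `x` of the box `∏ i, [0, a i]` with `∑ i, x i = k`. The level counts
of such a box are the coefficients of `∏ i, (1 + t + ⋯ + t ^ a i)`, and they are symmetric and
unimodal: adding one factor convolves a symmetric unimodal sequence with a box
`1 + t + ⋯ + t ^ A`, whose increments `f (k + 1) - f (k - A)` are nonnegative below the centre.
Hence the middle level `⌊N / 2⌋` is the largest.
-/

/-- `f` is symmetric about `N / 2` (so `N` is twice the centre) and increasing up to it. -/
structure IsSymmUnimodal_s5 {M : Type*} [Preorder M] (f : ℤ → M) (N : ℤ) : Prop where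
  symm : ∀ k, f (N - k) = f k
  le_succ : ∀ k, 2 * k + 1 ≤ N → f k ≤ f (k + 1)

namespace IsSymmUnimodal_s5

variable {M : Type*} {f : ℤ → M} {N : ℤ}

theorem le_of_two_mul_le [Preorder M] (hf : IsSymmUnimodal_s5 f N) {k l : ℤ} (hkl : k ≤ l)
    (hl : 2 * l ≤ N) : f k ≤ f l := by
  induction l, hkl using Int.leInduction with
  | base => rfl
  | succ n _ ih => exact (ih (by omega)).trans (hf.le_succ n (by omega))

theorem le_of_le [Preorder M] (hf : IsSymmUnimodal_s5 f N) {k l : ℤ} (hkl : k ≤ l)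
    (hsum : k + l ≤ N) : f k ≤ f l := by
  by_cases hl : 2 * l ≤ N
  · exact hf.le_of_two_mul_le hkl hl
  · calc f k ≤ f (N - l) := hf.le_of_two_mul_le (by omega) (by omega)
      _ = f l := hf.symm l

theorem le_half_s5 [Preorder M] (hf : IsSymmUnimodal_s5 f N) (k : ℤ) : f k ≤ f (N / 2) := by
  by_cases hk : 2 * k ≤ N
  · exact hf.le_of_le (by omega) (by omega)
  · calc f k = f (N - k) := (hf.symm k).symm
      _ ≤ f (N / 2) := hf.le_of_le (by omega) (by omega)

theorem sum_range_sub [AddCommMonoid M] [PartialOrder M] [IsOrderedAddMonoid M]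
    (hf : IsSymmUnimodal_s5 f N) (A : ℕ) :
    IsSymmUnimodal_s5 (fun k ↦ ∑ j ∈ range (A + 1), f (k - j)) (A + N) where
  symm k := by
    calc ∑ j ∈ range (A + 1), f (A + N - k - j)
        = ∑ j ∈ range (A + 1), f (k - A + j) := by
          refine sum_congr rfl fun j _ ↦ ?_
          rw [← hf.symm]; congr 1; ring
      _ = ∑ j ∈ range (A + 1), f (k - A + ↑(A + 1 - 1 - j)) := (sum_range_reflect _ _).symm
      _ = ∑ j ∈ range (A + 1), f (k - j) := by
          refine sum_congr rfl fun j hj ↦ ?_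
          have := mem_range.mp hj
          congr 1; omega
  le_succ k hk := by
    have hstep : f (k - A) ≤ f (k + 1) := hf.le_of_le (by omega) (by omega)
    calc ∑ j ∈ range (A + 1), f (k - j)
        = ∑ j ∈ range A, f (k - j) + f (k - A) := sum_range_succ _ _
      _ ≤ ∑ j ∈ range A, f (k - j) + f (k + 1) := by gcongr
      _ = ∑ j ∈ range (A + 1), f (k + 1 - j) := by
          rw [sum_range_succ' (fun j : ℕ ↦ f (k + 1 - j))]
          push_cast
          simp only [add_sub_add_right_eq_sub, sub_zero]

end IsSymmUnimodal_s5

def boxLevelCount {m : ℕ} (a : Fin m → ℕ) (k : ℤ) : ℕ :=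
  #{x ∈ Fintype.piFinset fun i ↦ range (a i + 1) | ∑ i, (x i : ℤ) = k}

theorem boxLevelCount_zero (a : Fin 0 → ℕ) (k : ℤ) :
    boxLevelCount a k = if k = 0 then 1 else 0 := by
  simp [boxLevelCount, Fintype.piFinset_of_isEmpty, eq_comm, apply_ite card]

theorem boxLevelCount_succ {m : ℕ} (a : Fin (m + 1) → ℕ) (k : ℤ) :
    boxLevelCount a k = ∑ j ∈ range (a 0 + 1), boxLevelCount (Fin.tail a) (k - j) := by
  rw [boxLevelCount, card_eq_sum_card_fiberwise (f := fun x ↦ x 0) (t := range (a 0 + 1))]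
  · refine sum_congr rfl fun j hj ↦ card_nbij' Fin.tail (Fin.cons (α := fun _ ↦ ℕ) j) ?_ ?_ ?_ ?_
    · intro x hx
      simp only [mem_coe, mem_filter, Fintype.mem_piFinset, mem_range, Fin.sum_univ_succ] at hx ⊢
      obtain ⟨⟨hbox, hsum⟩, rfl⟩ := hx
      exact ⟨fun i ↦ hbox i.succ, by simp only [Fin.tail]; omega⟩
    · intro y hy
      simp only [mem_coe, mem_filter, Fintype.mem_piFinset, mem_range, Fin.sum_univ_succ,
        Fin.forall_fin_succ, Fin.cons_zero, Fin.cons_succ] at hy ⊢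
      exact ⟨⟨⟨by simpa using hj, hy.1⟩, by omega⟩, trivial⟩
    · intro x hx
      rw [← (mem_filter.mp hx).2]
      exact Fin.cons_self_tail x
    · intro y _
      simp
  · intro x hx
    simp_all

theorem isSymmUnimodal_boxLevelCount {m : ℕ} (a : Fin m → ℕ) :
    IsSymmUnimodal_s5 (boxLevelCount a) (∑ i, (a i : ℤ)) := by
  induction m with
  | zero =>
    refine ⟨fun k ↦ ?_, fun k hk ↦ ?_⟩ <;>
      simp only [boxLevelCount_zero, univ_eq_empty, sum_empty] at *
    · simp
    · split_ifs <;> omega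
  | succ m ih =>
    have h := (ih (Fin.tail a)).sum_range_sub (a 0)
    simp only [← boxLevelCount_succ] at h
    rwa [Fin.sum_univ_succ]

theorem ncard_twoColumn_eq_boxLevelCount {m : ℕ} (a : Fin m → ℕ) (s : ℕ) :
    {M : Fin m → Fin 2 → ℕ | (∀ i, M i 0 + M i 1 = a i) ∧
        (∑ i, M i 0 = s) ∧ (∑ i, M i 1 = (∑ i, a i) - s)}.ncard = boxLevelCount a s := by
  rw [boxLevelCount, ← Set.ncard_coe_finset]
  refine Set.ncard_congr (fun M _ i ↦ M i 0) ?_ ?_ ?_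
  · rintro M ⟨hrow, hcol, -⟩
    simp only [coe_filter, Set.mem_ofPred_eq, Fintype.mem_piFinset, mem_range]
    exact ⟨fun i ↦ by have := hrow i; omega, by exact_mod_cast hcol⟩
  · rintro M M' ⟨hrow, -⟩ ⟨hrow', -⟩ h
    funext i
    have h0 : M i 0 = M' i 0 := congrFun h i
    have h1 : M i 1 = M' i 1 := by have := hrow i; have := hrow' i; omega
    exact funext <| Fin.forall_fin_two.mpr ⟨h0, h1⟩
  · intro x hx
    simp only [coe_filter, Set.mem_ofPred_eq, Fintype.mem_piFinset, mem_range] at hx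
    obtain ⟨hbox, hsum⟩ := hx
    have hsum' : ∑ i, x i = s := by exact_mod_cast hsum
    refine ⟨fun i ↦ ![x i, a i - x i], ⟨fun i ↦ ?_, ?_, ?_⟩, rfl⟩
    · have := hbox i
      simp only [Matrix.cons_val_zero, Matrix.cons_val_one]
      omega
    · simpa using hsum'
    · simp only [Matrix.cons_val_one, Matrix.cons_val_zero]
      rw [sum_tsub_distrib _ fun i _ ↦ by have := hbox i; omega, hsum']

theorem balanced_two_column_maximizes_general (m : ℕ) (a : Fin m → ℕ)
    (N : ℕ) (hN : N = ∑ i, a i) (r : ℕ) :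
    {M : Fin m → Fin 2 → ℕ | (∀ i, M i 0 + M i 1 = a i) ∧
        (∑ i, M i 0 = r) ∧ (∑ i, M i 1 = N - r)}.ncard ≤
      {M : Fin m → Fin 2 → ℕ | (∀ i, M i 0 + M i 1 = a i) ∧
        (∑ i, M i 0 = N / 2) ∧ (∑ i, M i 1 = N - N / 2)}.ncard := by
  subst hN
  rw [ncard_twoColumn_eq_boxLevelCount, ncard_twoColumn_eq_boxLevelCount]
  exact_mod_cast (isSymmUnimodal_boxLevelCount a).le_half_s5 r

/-- Among all 2-column margins, the balanced one maximizes the number of contingency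
tables: for any `0 ≤ r ≤ N`, the number of `m × 2` nonnegative integer matrices with
row sums `a_1,...,a_m` and column sums `(r, N - r)` is at most the number with column
sums `(⌊N/2⌋, ⌈N/2⌉)`. -/
theorem balanced_two_column_maximizes (m : ℕ) (a : Fin m → ℕ) (ha : ∀ i, 0 < a i)
    (N : ℕ) (hN : N = ∑ i, a i) (r : ℕ) (hr : r ≤ N) :
    {M : Fin m → Fin 2 → ℕ | (∀ i, M i 0 + M i 1 = a i) ∧
        (∑ i, M i 0 = r) ∧ (∑ i, M i 1 = N - r)}.ncard ≤
      {M : Fin m → Fin 2 → ℕ | (∀ i, M i 0 + M i 1 = a i) ∧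
        (∑ i, M i 0 = N / 2) ∧ (∑ i, M i 1 = N - N / 2)}.ncard :=
  balanced_two_column_maximizes_general m a N hN r
end

section
/- Averaging two adjacent column margins does not decrease the number of contingency tables: if b' is obtained from b = (b_1,...,b_n) by replacing (b_1,b_2) with (⌈(b_1+b_2)/2⌉, ⌊(b_1+b_2)/2⌋), then #M(a,b) ≤ #M(a,b'), where M(a,b) denotes the set of m×n nonnegative integer matrices with row sums a_1,...,a_m and column sums b_1,...,b_n. -/
/-!
Merge the first two columns of a table into one, with entries `r i = M i 0 + M i 1`. Over a
fixed merged table, a table with column sums `b` is determined by its first column `x`, which is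
any lattice point of the box `0 ≤ x ≤ r` on the hyperplane `∑ x = b 0`; for `b'` the hyperplane
is `∑ x = ⌈(b 0 + b 1) / 2⌉` instead, and `∑ r = b 0 + b 1` in both cases. The number of lattice
points of a box on the hyperplane `∑ x = c` is an iterated convolution of indicators of intervals,
hence symmetric and unimodal in `c` about half the height of the box. So the central slice is the
largest, and each fiber for `b'` is at least as big as the one for `b`.
-/

open Finset

structure IsSymmUnimodal_s6 (g : ℤ → ℕ) (s : ℤ) : Prop where
  symm : ∀ x, g (s - x) = g x
  monotoneOn : MonotoneOn g (Set.Iic (s / 2))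

namespace IsSymmUnimodal_s6

variable {g : ℤ → ℕ} {s : ℤ}

lemma of_le_add_one (symm : ∀ x, g (s - x) = g x)
    (step : ∀ c, 2 * c + 2 ≤ s → g c ≤ g (c + 1)) : IsSymmUnimodal_s6 g s :=
  ⟨symm, monotoneOn_of_le_add_one Set.ordConnected_Iic fun c _ _ hc =>
    step c (by rw [Set.mem_Iic] at hc; omega)⟩

lemma le_of_abs_le (hg : IsSymmUnimodal_s6 g s) {x y : ℤ} (h : |2 * y - s| ≤ |2 * x - s|) :
    g x ≤ g y := by
  have fold : ∀ z, g (min z (s - z)) = g z := fun z => by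
    rcases min_cases z (s - z) with ⟨hz, -⟩ | ⟨hz, -⟩ <;> rw [hz]
    exact hg.symm z
  rw [← fold x, ← fold y]
  refine hg.monotoneOn (by rw [Set.mem_Iic]; omega) (by rw [Set.mem_Iic]; omega) ?_
  rcases abs_cases (2 * y - s) with h1 | h1 <;> rcases abs_cases (2 * x - s) with h2 | h2 <;> omega

lemma le_apply_ceil_half (hg : IsSymmUnimodal_s6 g s) (x : ℤ) : g x ≤ g ((s + 1) / 2) :=
  hg.le_of_abs_le <| by
    rcases abs_cases (2 * ((s + 1) / 2) - s) with h1 | h1 <;>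
      rcases abs_cases (2 * x - s) with h2 | h2 <;> omega

lemma sum_range_sub_s6 (hg : IsSymmUnimodal_s6 g s) (r : ℕ) :
    IsSymmUnimodal_s6 (fun c => ∑ j ∈ range (r + 1), g (c - j)) (s + r) := by
  refine of_le_add_one (fun x => ?_) fun c hc => ?_
  · rw [← sum_range_reflect]
    refine sum_congr rfl fun j hj => ?_
    rw [mem_range] at hj
    rw [← hg.symm]
    congr 1
    omega
  · -- sliding the window `[c - r, c]` one step right trades `g (c - r)` for `g (c + 1)`
    have hwindow : g (c - r) ≤ g (c + 1) := hg.le_of_abs_le <| by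
      rcases abs_cases (2 * (c + 1) - s) with h1 | h1 <;>
        rcases abs_cases (2 * (c - r) - s) with h2 | h2 <;> omega
    rw [sum_range_succ, sum_range_succ']
    simp only [Nat.cast_add, Nat.cast_one, add_sub_add_right_eq_sub, Nat.cast_zero, sub_zero]
    exact add_le_add_right hwindow _

end IsSymmUnimodal_s6

lemma isSymmUnimodal_indicator_zero : IsSymmUnimodal_s6 (fun c => if c = 0 then 1 else 0) 0 :=
  .of_le_add_one (fun x => by simp) fun c hc => by simp [show c ≠ 0 by omega]

def boxSliceCard {k : ℕ} (r : Fin k → ℕ) (c : ℤ) : ℕ :=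
  #{x ∈ Iic r | ∑ i, (x i : ℤ) = c}

lemma boxSliceCard_fin_zero (r : Fin 0 → ℕ) :
    boxSliceCard r = fun c => if c = 0 then 1 else 0 := by
  ext c
  have hbox : Iic r = {r} :=
    eq_singleton_iff_unique_mem.2 ⟨mem_Iic.2 le_rfl, fun x _ => Subsingleton.elim x r⟩
  rw [boxSliceCard, hbox, filter_singleton]
  split_ifs <;> simp_all [eq_comm]

lemma boxSliceCard_succ {k : ℕ} (r : Fin (k + 1) → ℕ) (c : ℤ) :
    boxSliceCard r c = ∑ j ∈ range (r 0 + 1), boxSliceCard (Fin.tail r) (c - j) := by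
  classical
  rw [boxSliceCard, card_eq_sum_card_fiberwise (f := fun x => x 0) (t := range (r 0 + 1))]
  · refine sum_congr rfl fun j hj => ?_
    rw [filter_filter]
    refine card_nbij' Fin.tail (fun y => Fin.cons j y) (fun x hx => ?_) (fun y hy => ?_)
      (fun x hx => ?_) (fun y _ => Fin.tail_cons _ _)
    · simp only [coe_filter, Set.mem_ofPred_eq, mem_Iic, Fin.sum_univ_succ] at hx ⊢
      obtain ⟨hxr, hsum, rfl⟩ := hx
      exact ⟨fun i => hxr i.succ, eq_sub_of_add_eq' hsum⟩
    · simp only [coe_filter, Set.mem_ofPred_eq, mem_Iic, Fin.sum_univ_succ, Fin.cons_zero,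
        Fin.cons_succ, Fin.cons_le, mem_range] at hy hj ⊢
      obtain ⟨hyr, hsum⟩ := hy
      exact ⟨⟨Nat.lt_succ_iff.1 hj, hyr⟩, by rw [hsum, add_sub_cancel], trivial⟩
    · simp only [coe_filter, Set.mem_ofPred_eq] at hx
      rw [← hx.2.2]
      exact Fin.cons_self_tail x
  · intro x hx
    rw [mem_coe, mem_filter, mem_Iic] at hx
    exact mem_coe.2 (mem_range_succ_iff.2 (hx.1 0))

lemma isSymmUnimodal_boxSliceCard {k : ℕ} (r : Fin k → ℕ) :
    IsSymmUnimodal_s6 (boxSliceCard r) (∑ i, (r i : ℤ)) := by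
  induction k with
  | zero => simpa [boxSliceCard_fin_zero] using isSymmUnimodal_indicator_zero
  | succ k ih =>
    rw [funext (boxSliceCard_succ r), Fin.sum_univ_succ, add_comm ((r 0 : ℕ) : ℤ)]
    exact (ih (Fin.tail r)).sum_range_sub_s6 (r 0)

lemma Set.ncard_le_ncard_of_ncard_fiber_le {α β : Type*} {s t : Set α} (ht : t.Finite)
    (f : α → β) (h : ∀ y, {x ∈ s | f x = y}.ncard ≤ {x ∈ t | f x = y}.ncard) :
    s.ncard ≤ t.ncard := by
  classical
  obtain hs | hs := s.finite_or_infinite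
  swap
  · rw [hs.ncard]; exact Nat.zero_le _
  obtain ⟨S, rfl⟩ := hs.exists_finset_coe
  obtain ⟨T, rfl⟩ := ht.exists_finset_coe
  have hfiber : ∀ y, #{x ∈ S | f x = y} ≤ #{x ∈ T | f x = y} := fun y => by
    rw [← Set.ncard_coe_finset, ← Set.ncard_coe_finset, coe_filter, coe_filter]
    exact h y
  have hS : ∀ x ∈ S, f x ∈ S.image f ∪ T.image f := fun x hx =>
    Finset.mem_union_left _ (Finset.mem_image_of_mem f hx)
  have hT : ∀ x ∈ T, f x ∈ S.image f ∪ T.image f := fun x hx =>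
    Finset.mem_union_right _ (Finset.mem_image_of_mem f hx)
  rw [Set.ncard_coe_finset, Set.ncard_coe_finset, card_eq_sum_card_fiberwise hS,
    card_eq_sum_card_fiberwise hT]
  exact sum_le_sum fun y _ => hfiber y

def contingencyTables {ι κ : Type*} [Fintype ι] [Fintype κ] (a : ι → ℕ) (b : κ → ℕ) :
    Set (ι → κ → ℕ) :=
  {M | (∀ i, ∑ j, M i j = a i) ∧ ∀ j, ∑ i, M i j = b j}

lemma contingencyTables_finite {ι κ : Type*} [Fintype ι] [Fintype κ] (a : ι → ℕ)
    (b : κ → ℕ) :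
    (contingencyTables a b).Finite := by
  classical
  refine (Set.finite_Iic fun i _ => a i).subset fun M hM i j => ?_
  change M i j ≤ a i
  rw [← hM.1 i]
  exact single_le_sum (fun _ _ => Nat.zero_le _) (mem_univ j)

section MergeFirstTwo

variable {n : ℕ} {α : Type*}

def mergeFirstTwo [AddCommMonoid α] : (Fin (n + 2) → α) →+ (Fin (n + 1) → α) where
  toFun v := Fin.cons (v 0 + v 1) fun j => v j.succ.succ
  map_zero' := by ext j; cases j using Fin.cases <;> simp
  map_add' v w := by ext j; cases j using Fin.cases <;> simp [add_add_add_comm]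

@[simp]
lemma mergeFirstTwo_apply_zero [AddCommMonoid α] (v : Fin (n + 2) → α) :
    mergeFirstTwo v 0 = v 0 + v 1 := rfl

@[simp]
lemma mergeFirstTwo_apply_succ [AddCommMonoid α] (v : Fin (n + 2) → α) (j : Fin n) :
    mergeFirstTwo v j.succ = v j.succ.succ := rfl

lemma sum_mergeFirstTwo [AddCommMonoid α] (v : Fin (n + 2) → α) :
    ∑ j, mergeFirstTwo v j = ∑ j, v j := by
  simp [Fin.sum_univ_succ, add_assoc]

lemma mergeFirstTwo_eq_iff [AddCommMonoid α] {v : Fin (n + 2) → α} {w : Fin (n + 1) → α} :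
    mergeFirstTwo v = w ↔ v 0 + v 1 = w 0 ∧ ∀ j : Fin n, v j.succ.succ = w j.succ := by
  rw [funext_iff, Fin.forall_fin_succ]; rfl

lemma eq_of_mergeFirstTwo_eq [AddCancelCommMonoid α] {v w : Fin (n + 2) → α}
    (h : mergeFirstTwo v = mergeFirstTwo w) (h0 : v 0 = w 0) : v = w := by
  obtain ⟨h1, hrest⟩ := mergeFirstTwo_eq_iff.1 h
  funext j
  rcases Fin.eq_zero_or_eq_succ j with rfl | ⟨j, rfl⟩
  · exact h0
  rcases Fin.eq_zero_or_eq_succ j with rfl | ⟨j, rfl⟩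
  · exact add_left_cancel (h0 ▸ h1)
  · exact hrest j

variable {m : ℕ} {a : Fin m → ℕ} {c : Fin (n + 2) → ℕ}

lemma mergeFirstTwo_mem_contingencyTables {M : Fin m → Fin (n + 2) → ℕ}
    (hM : M ∈ contingencyTables a c) :
    mergeFirstTwo ∘ M ∈ contingencyTables a (mergeFirstTwo c) := by
  refine ⟨fun i => (sum_mergeFirstTwo (M i)).trans (hM.1 i), fun j => ?_⟩
  have hc : c = ∑ i, M i := funext fun j => by rw [Finset.sum_apply]; exact (hM.2 j).symm
  rw [hc, map_sum, Finset.sum_apply]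
  rfl

lemma mem_contingencyTables_of_mergeFirstTwo_mem {M : Fin m → Fin (n + 2) → ℕ}
    (hM : mergeFirstTwo ∘ M ∈ contingencyTables a (mergeFirstTwo c))
    (h0 : ∑ i, M i 0 = c 0) : M ∈ contingencyTables a c := by
  refine ⟨fun i => (sum_mergeFirstTwo (M i)).symm.trans (hM.1 i), fun j => ?_⟩
  suffices hc : ∑ i, M i = c by rw [← hc, Finset.sum_apply]
  refine eq_of_mergeFirstTwo_eq ?_ (by rw [Finset.sum_apply, h0])
  rw [map_sum]
  funext j
  rw [Finset.sum_apply]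
  exact hM.2 j

variable {N : Fin m → Fin (n + 1) → ℕ}

lemma contingencyTables_fiber_mergeFirstTwo_eq_empty
    (hN : N ∉ contingencyTables a (mergeFirstTwo c)) :
    {M ∈ contingencyTables a c | mergeFirstTwo ∘ M = N} = ∅ := by
  rw [Set.eq_empty_iff_forall_notMem]
  rintro M ⟨hM, rfl⟩
  exact hN (mergeFirstTwo_mem_contingencyTables hM)

lemma ncard_contingencyTables_fiber_mergeFirstTwo
    (hN : N ∈ contingencyTables a (mergeFirstTwo c)) :
    {M ∈ contingencyTables a c | mergeFirstTwo ∘ M = N}.ncard =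
      boxSliceCard (fun i => N i 0) (c 0) := by
  rw [boxSliceCard, ← Set.ncard_coe_finset]
  refine Set.ncard_congr (fun M _ i => M i 0) (fun M hM => ?_) (fun M M' hM hM' h => ?_)
    (fun x hx => ?_)
  · obtain ⟨⟨-, hcol⟩, rfl⟩ := hM
    simp only [coe_filter, Set.mem_ofPred_eq, mem_Iic]
    exact ⟨fun i => Nat.le_add_right _ _, by exact_mod_cast hcol 0⟩
  · obtain ⟨-, hMN⟩ := hM
    obtain ⟨-, hMN'⟩ := hM'
    funext i
    exact eq_of_mergeFirstTwo_eq (congrFun (hMN.trans hMN'.symm) i) (congrFun h i)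
  · simp only [coe_filter, Set.mem_ofPred_eq, mem_Iic] at hx
    obtain ⟨hxN, hsum⟩ := hx
    set M : Fin m → Fin (n + 2) → ℕ :=
      fun i => Fin.cons (x i) (Fin.cons (N i 0 - x i) (Fin.tail (N i)))
    have hMN : mergeFirstTwo ∘ M = N := funext fun i =>
      mergeFirstTwo_eq_iff.2 ⟨Nat.add_sub_cancel' (hxN i), fun j => rfl⟩
    exact ⟨M, ⟨mem_contingencyTables_of_mergeFirstTwo_mem (hMN ▸ hN) (by exact_mod_cast hsum),
      hMN⟩, rfl⟩

end MergeFirstTwo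

theorem averaging_columns_general (m n : ℕ) (a : Fin m → ℕ) (b : Fin (n + 2) → ℕ)
    (b' : Fin (n + 2) → ℕ)
    (hb' : b' = fun j => if j = 0 then (b 0 + b 1 + 1) / 2
      else if j = 1 then (b 0 + b 1) / 2 else b j) :
    {M : Fin m → Fin (n + 2) → ℕ | (∀ i, ∑ j, M i j = a i) ∧
        (∀ j, ∑ i, M i j = b j)}.ncard ≤
      {M : Fin m → Fin (n + 2) → ℕ | (∀ i, ∑ j, M i j = a i) ∧
        (∀ j, ∑ i, M i j = b' j)}.ncard := by
  have hmerge : mergeFirstTwo b' = mergeFirstTwo b := by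
    subst hb'
    refine mergeFirstTwo_eq_iff.2 ⟨?_, fun j => ?_⟩
    · simp; omega
    · simp [Fin.ext_iff]
  show (contingencyTables a b).ncard ≤ (contingencyTables a b').ncard
  refine Set.ncard_le_ncard_of_ncard_fiber_le (contingencyTables_finite a b')
    (mergeFirstTwo ∘ ·) fun N => ?_
  by_cases hN : N ∈ contingencyTables a (mergeFirstTwo b)
  · rw [ncard_contingencyTables_fiber_mergeFirstTwo hN,
      ncard_contingencyTables_fiber_mergeFirstTwo (hmerge ▸ hN)]
    have hs : ∑ i, N i 0 = b 0 + b 1 := hN.2 0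
    have hb'0 : b' 0 = (b 0 + b 1 + 1) / 2 := by simp [hb']
    convert (isSymmUnimodal_boxSliceCard fun i => N i 0).le_apply_ceil_half (b 0) using 2
    rw [← Nat.cast_sum, hs, hb'0]
    omega
  · rw [contingencyTables_fiber_mergeFirstTwo_eq_empty hN, Set.ncard_empty]
    exact Nat.zero_le _

/-- Averaging two adjacent column margins does not decrease the number of contingency
tables: if `b'` is obtained from `b = (b_1,...,b_n)` by replacing `(b_1, b_2)` with
`(⌈(b_1+b_2)/2⌉, ⌊(b_1+b_2)/2⌋)`, then `#M(a,b) ≤ #M(a,b')`.  Here the columns are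
indexed by `Fin (n+2)` (so there are at least two columns). -/
theorem averaging_columns (m n : ℕ) (a : Fin m → ℕ) (b : Fin (n + 2) → ℕ)
    (ha : ∀ i, 0 < a i) (hb : ∀ j, 0 < b j)
    (hsum : ∑ i, a i = ∑ j, b j)
    (b' : Fin (n + 2) → ℕ)
    (hb' : b' = fun j => if j = 0 then (b 0 + b 1 + 1) / 2
      else if j = 1 then (b 0 + b 1) / 2 else b j) :
    {M : Fin m → Fin (n + 2) → ℕ | (∀ i, ∑ j, M i j = a i) ∧
        (∀ j, ∑ i, M i j = b j)}.ncard ≤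
      {M : Fin m → Fin (n + 2) → ℕ | (∀ i, ∑ j, M i j = a i) ∧
        (∀ j, ∑ i, M i j = b' j)}.ncard :=
  averaging_columns_general m n a b b' hb'
end

section
/- For fixed x ≥ 0, the probability that the first coordinate of a uniform nonnegative-integer composition of Cn into n parts equals x converges, as n → ∞, to (1/(1+C))·(C/(1+C))^x, i.e. the Geometric(C) density. -/
open Filter

/-!
For fixed `n`, Pascal-type identities give `p_n(0) = (n - 1) / ((C + 1) n - 1)` and
`p_n(x + 1) = p_n(x) (C n - x) / ((C + 1) n - x - 2)`: ratios of affine functions of `n`, with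
limits `1 / (C + 1)` and `C / (C + 1)`. Induction on `x` gives the geometric limit.
-/

lemma Nat.cast_choose_div_choose_add_one_add_one {m k : ℕ} (hk : k ≤ m) :
    (m.choose k : ℝ) / (m + 1).choose (k + 1) = (k + 1) / (m + 1) := by
  have hpos : ((m + 1).choose (k + 1) : ℝ) ≠ 0 := by
    exact_mod_cast (Nat.choose_pos (by omega)).ne'
  rw [div_eq_div_iff hpos (by positivity)]
  have key : ((m + 1 : ℕ) * m.choose k : ℝ) = (m + 1).choose (k + 1) * (k + 1 : ℕ) := by
    exact_mod_cast Nat.add_one_mul_choose_eq m k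
  push_cast at key
  linear_combination key

lemma Nat.cast_choose_div_choose_add_one {m k : ℕ} (hk : k ≤ m + 1) :
    (m.choose k : ℝ) / (m + 1).choose k = (m + 1 - k) / (m + 1) := by
  have hpos : ((m + 1).choose k : ℝ) ≠ 0 := by exact_mod_cast (Nat.choose_pos hk).ne'
  rw [div_eq_div_iff hpos (by positivity)]
  have key := Nat.choose_mul_succ_eq m k
  rw [← Nat.cast_inj (R := ℝ), Nat.cast_mul, Nat.cast_mul, Nat.cast_sub hk] at key
  push_cast at key
  linear_combination key

/-- The paper's `p_n(x)`. -/
noncomputable def compositionMarginal (C n x : ℕ) : ℝ :=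
  (Nat.choose (C * n - x + n - 2) (n - 2) : ℝ) / (Nat.choose (C * n + n - 1) (n - 1) : ℝ)

lemma compositionMarginal_zero {C n : ℕ} (hn : 2 ≤ n) :
    compositionMarginal C n 0 = (-1 + 1 * n) / (-1 + (C + 1) * n) := by
  obtain ⟨m, rfl⟩ : ∃ m, n = m + 2 := ⟨n - 2, by omega⟩
  have htop : C * (m + 2) - 0 + (m + 2) - 2 = C * (m + 2) + m := by omega
  have hbot : C * (m + 2) + (m + 2) - 1 = C * (m + 2) + m + 1 := by omega
  rw [compositionMarginal, htop, hbot, Nat.add_sub_cancel, show m + 2 - 1 = m + 1 by omega,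
    Nat.cast_choose_div_choose_add_one_add_one (by omega)]
  push_cast
  ring_nf

lemma compositionMarginal_succ {C n x : ℕ} (hn : 2 ≤ n) (hx : x < C * n) :
    compositionMarginal C n (x + 1) =
      compositionMarginal C n x * ((-x + C * n) / (-(x + 2) + (C + 1) * n)) := by
  obtain ⟨m, rfl⟩ : ∃ m, n = m + 2 := ⟨n - 2, by omega⟩
  obtain ⟨r, hr⟩ : ∃ r, C * (m + 2) = x + 1 + r := ⟨C * (m + 2) - (x + 1), by omega⟩
  have htop : C * (m + 2) - (x + 1) + (m + 2) - 2 = r + m := by omega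
  have htop' : C * (m + 2) - x + (m + 2) - 2 = r + m + 1 := by omega
  have hpos : ((r + m + 1).choose m : ℝ) ≠ 0 := by
    exact_mod_cast (Nat.choose_pos (by omega)).ne'
  have hratio := (div_eq_iff hpos).mp
    (Nat.cast_choose_div_choose_add_one (m := r + m) (k := m) (by omega))
  have hr' : (C : ℝ) * (m + 2) = x + 1 + r := by exact_mod_cast hr
  have hfactor : ((r + m : ℕ) + 1 - m : ℝ) / ((r + m : ℕ) + 1) =
      (-x + C * (m + 2 : ℕ)) / (-(x + 2) + (C + 1) * (m + 2 : ℕ)) := by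
    push_cast
    congr 1 <;> linarith
  rw [compositionMarginal, compositionMarginal, htop, htop', Nat.add_sub_cancel, hratio, hfactor]
  ring

theorem tendsto_compositionMarginal {C : ℕ} (hC : 1 ≤ C) (x : ℕ) :
    Tendsto (fun n => compositionMarginal C n x) atTop
      (nhds (1 / (C + 1) * ((C : ℝ) / (C + 1)) ^ x)) := by
  have hC1 : (C : ℝ) + 1 ≠ 0 := by positivity
  induction x with
  | zero =>
    simpa using (tendsto_add_mul_div_add_mul_atTop_nhds (-1 : ℝ) (-1) 1 hC1).congr'
      ((eventually_ge_atTop 2).mono fun n hn => (compositionMarginal_zero hn).symm)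
  | succ x ih =>
    rw [pow_succ, ← mul_assoc]
    refine (ih.mul (tendsto_add_mul_div_add_mul_atTop_nhds (-x : ℝ) (-(x + 2)) C hC1)).congr' ?_
    filter_upwards [eventually_ge_atTop (x + 2)] with n hn
    exact (compositionMarginal_succ (by omega) (by nlinarith)).symm

/-- For fixed `x ≥ 0`, the probability
`p_n(x) = C(Cn - x + n - 2, n - 2) / C(Cn + n - 1, n - 1)` that the first coordinate of
a uniform nonnegative-integer composition of `Cn` into `n` parts equals `x` converges,
as `n → ∞`, to the Geometric(C) density `(1/(1+C)) (C/(1+C))^x`. -/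
theorem marginal_tendsto_geometric (C : ℕ) (hC : 2 ≤ C) (x : ℕ) :
    Tendsto (fun n : ℕ =>
        ((Nat.choose (C * n - x + n - 2) (n - 2) : ℝ) /
          (Nat.choose (C * n + n - 1) (n - 1) : ℝ)))
      atTop (nhds ((1 / (1 + (C : ℝ))) * ((C : ℝ) / (1 + (C : ℝ))) ^ x)) := by
  simpa only [compositionMarginal, add_comm (1 : ℝ)] using
    tendsto_compositionMarginal (by omega : 1 ≤ C) x
end

section
/- Let Y_1,...,Y_{n²} be i.i.d. Geometric with mean C and λ = log((1+C)/C). Then (1/λ)H_{n²} − 1 < E[max_{1≤i≤n²} Y_i] < (1/λ)H_{n²}, where H_m = ∑_{k=1}^m 1/k. -/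
/-!
Put `q = C / (1 + C) = exp (-λ)`. Then `P(Y_i ≥ k) = q ^ k`, so by independence the maximum `M`
satisfies `P(M ≥ k) = g k` with `g t = 1 - (1 - exp (-λ t)) ^ n²`, the survival function of the
maximum of `n²` independent exponentials of rate `λ`, and `E[M] = ∑_{k ≥ 1} g k`. As `g` is
strictly decreasing with `g 0 = 1`, comparison with the integral gives
`∫₀^∞ g - 1 < E[M] < ∫₀^∞ g`; expanding `g = e^{-λt} ∑_{i < n²} (1 - e^{-λt})^i` gives
`∫₀^∞ g = H_{n²} / λ`.
-/

open MeasureTheory ProbabilityTheory Set Filter Topology Real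
open scoped ENNReal

section SumIntegral

variable {f : ℝ → ℝ}

lemma StrictAntiOn.lt_intervalIntegral (anti : StrictAntiOn f (Ici 0))
    (cont : ContinuousOn f (Icc 0 1)) : f 1 < ∫ x in (0:ℝ)..1, f x := by
  have h := intervalIntegral.integral_lt_integral_of_continuousOn_of_le_of_exists_lt
    (f := fun _ => f 1) zero_lt_one continuousOn_const cont
    (fun x hx => anti.antitoneOn (Ioc_subset_Icc_self.trans Icc_subset_Ici_self hx)
      (by norm_num) hx.2)
    ⟨0, by norm_num, anti (by norm_num) (by norm_num) zero_lt_one⟩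
  simpa using h

lemma StrictAntiOn.intervalIntegral_lt (anti : StrictAntiOn f (Ici 0))
    (cont : ContinuousOn f (Icc 0 1)) : ∫ x in (0:ℝ)..1, f x < f 0 := by
  have h := intervalIntegral.integral_lt_integral_of_continuousOn_of_le_of_exists_lt
    (g := fun _ => f 0) zero_lt_one cont continuousOn_const
    (fun x hx => anti.antitoneOn (by norm_num) (Ioc_subset_Icc_self.trans Icc_subset_Ici_self hx)
      hx.1.le)
    ⟨1, by norm_num, anti (by norm_num) (by norm_num) zero_lt_one⟩
  simpa using h

theorem StrictAntiOn.tsum_add_one_lt_integral (anti : StrictAntiOn f (Ici 0))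
    (cont : ContinuousOn f (Icc 0 1)) (integrable : IntegrableOn f (Ioi 0))
    (nonneg : ∀ t ∈ Ioi 0, 0 ≤ f t) :
    ∑' n : ℕ, f (n + 1 : ℕ) < ∫ x in Ioi 0, f x := by
  have summable := anti.antitoneOn.summable_of_integrableOn_Ioi_zero integrable nonneg
  have tail := AntitoneOn.tsum_comp_add_le_integral 1
    (by simpa using anti.antitoneOn.mono (Ici_subset_Ici.2 zero_le_one))
    (by simpa using integrable.mono_set (Ioi_subset_Ioi zero_le_one))
    (by simpa using fun t (ht : 1 < t) => nonneg t (zero_lt_one.trans ht))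
  have split := intervalIntegral.integral_Ioi_sub_Ioi integrable zero_le_one
  rw [((summable_nat_add_iff 1).2 summable).tsum_eq_zero_add]
  push_cast at tail ⊢
  linarith [anti.lt_intervalIntegral cont]

theorem StrictAntiOn.integral_lt_tsum (anti : StrictAntiOn f (Ici 0))
    (cont : ContinuousOn f (Icc 0 1)) (integrable : IntegrableOn f (Ioi 0))
    (nonneg : ∀ t ∈ Ioi 0, 0 ≤ f t) :
    ∫ x in Ioi 0, f x < ∑' n : ℕ, f n := by
  have summable := anti.antitoneOn.summable_of_integrableOn_Ioi_zero integrable nonneg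
  have tail := AntitoneOn.integral_le_tsum_comp_add 1
    (by simpa using anti.antitoneOn.mono (Ici_subset_Ici.2 zero_le_one)) (by simpa using summable)
    (by simpa using fun t (ht : 1 < t) => nonneg t (zero_lt_one.trans ht))
  have split := intervalIntegral.integral_Ioi_sub_Ioi integrable zero_le_one
  rw [summable.tsum_eq_zero_add]
  push_cast at tail ⊢
  linarith [anti.intervalIntegral_lt cont]

end SumIntegral

noncomputable def maxExpSurvival (r : ℝ) (N : ℕ) (t : ℝ) : ℝ := 1 - (1 - exp (-(r * t))) ^ N

lemma hasDerivAt_one_sub_exp_pow (r t : ℝ) (i : ℕ) :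
    HasDerivAt (fun t => (1 - exp (-(r * t))) ^ (i + 1))
      ((i + 1) * r * (exp (-(r * t)) * (1 - exp (-(r * t))) ^ i)) t := by
  have h : HasDerivAt (fun t => 1 - exp (-(r * t))) (r * exp (-(r * t))) t := by
    simpa [mul_comm] using ((hasDerivAt_id' t).const_mul r).neg.exp.const_sub 1
  refine (h.fun_pow (i + 1)).congr_deriv ?_
  rw [Nat.add_sub_cancel]
  push_cast
  ring

section MaxExpSurvival

variable {r : ℝ} {N : ℕ}

lemma continuous_maxExpSurvival : Continuous (maxExpSurvival r N) := by
  unfold maxExpSurvival; fun_prop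

lemma maxExpSurvival_zero (hN : N ≠ 0) : maxExpSurvival r N 0 = 1 := by
  simp [maxExpSurvival, zero_pow hN]

lemma maxExpSurvival_natCast (k : ℕ) : maxExpSurvival r N k = 1 - (1 - exp (-r) ^ k) ^ N := by
  rw [maxExpSurvival, ← exp_nat_mul, mul_neg, mul_comm]

lemma maxExpSurvival_eq_sum (t : ℝ) : maxExpSurvival r N t =
    ∑ i ∈ Finset.range N, exp (-(r * t)) * (1 - exp (-(r * t))) ^ i := by
  rw [← Finset.mul_sum, maxExpSurvival, ← mul_neg_geom_sum, sub_sub_cancel]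

lemma one_sub_exp_mem_Icc (hr : 0 ≤ r) {t : ℝ} (ht : 0 ≤ t) : 1 - exp (-(r * t)) ∈ Icc 0 1 :=
  ⟨sub_nonneg.2 (exp_le_one_iff.2 (by nlinarith)), sub_le_self _ (exp_pos _).le⟩

lemma maxExpSurvival_nonneg (hr : 0 ≤ r) {t : ℝ} (ht : 0 ≤ t) : 0 ≤ maxExpSurvival r N t :=
  sub_nonneg.2 (pow_le_one₀ (one_sub_exp_mem_Icc hr ht).1 (one_sub_exp_mem_Icc hr ht).2)

lemma strictAntiOn_maxExpSurvival (hr : 0 < r) (hN : N ≠ 0) :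
    StrictAntiOn (maxExpSurvival r N) (Ici 0) := by
  intro s hs t _ hst
  have hexp : exp (-(r * t)) < exp (-(r * s)) := exp_lt_exp.2 (by nlinarith)
  have := pow_lt_pow_left₀ (by linarith : 1 - exp (-(r * s)) < 1 - exp (-(r * t)))
    (one_sub_exp_mem_Icc hr.le hs).1 hN
  simp only [maxExpSurvival]
  linarith

lemma integrableOn_exp_mul_one_sub_exp_pow (hr : 0 < r) (i : ℕ) :
    IntegrableOn (fun t => exp (-(r * t)) * (1 - exp (-(r * t))) ^ i) (Ioi 0) := by
  have hexp : IntegrableOn (fun t => exp (-(r * t))) (Ioi 0) := by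
    simpa using exp_neg_integrableOn_Ioi 0 hr
  refine hexp.mono' (by fun_prop) ?_
  filter_upwards [ae_restrict_mem measurableSet_Ioi] with t ht
  have h01 := one_sub_exp_mem_Icc hr.le ht.le
  rw [norm_of_nonneg (mul_nonneg (exp_pos _).le (pow_nonneg h01.1 i))]
  exact mul_le_of_le_one_right (exp_pos _).le (pow_le_one₀ h01.1 h01.2)

lemma integral_exp_mul_one_sub_exp_pow (hr : 0 < r) (i : ℕ) :
    ∫ t in Ioi 0, exp (-(r * t)) * (1 - exp (-(r * t))) ^ i = 1 / (r * (i + 1)) := by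
  have hderiv (t : ℝ) (_ : t ∈ Ici 0) :
      HasDerivAt (fun t => (1 - exp (-(r * t))) ^ (i + 1) / (r * (i + 1)))
        (exp (-(r * t)) * (1 - exp (-(r * t))) ^ i) t := by
    refine ((hasDerivAt_one_sub_exp_pow r t i).div_const (r * (i + 1))).congr_deriv ?_
    field_simp
  have hlim : Tendsto (fun t => (1 - exp (-(r * t))) ^ (i + 1) / (r * (i + 1))) atTop
      (𝓝 (1 / (r * (i + 1)))) := by
    have h0 : Tendsto (fun t => exp (-(r * t))) atTop (𝓝 0) :=
      tendsto_exp_atBot.comp (tendsto_neg_atTop_atBot.comp (tendsto_id.const_mul_atTop hr))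
    simpa using ((h0.const_sub 1).pow (i + 1)).div_const (r * (i + 1))
  rw [integral_Ioi_of_hasDerivAt_of_tendsto' hderiv (integrableOn_exp_mul_one_sub_exp_pow hr i)
    hlim]
  simp

lemma integrableOn_maxExpSurvival (hr : 0 < r) : IntegrableOn (maxExpSurvival r N) (Ioi 0) := by
  simp_rw [funext maxExpSurvival_eq_sum]
  exact integrable_finsetSum _ fun i _ => integrableOn_exp_mul_one_sub_exp_pow hr i

lemma integral_maxExpSurvival (hr : 0 < r) :
    ∫ t in Ioi 0, maxExpSurvival r N t = 1 / r * ∑ k ∈ Finset.range N, (1 : ℝ) / (k + 1) := by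
  simp_rw [maxExpSurvival_eq_sum, Finset.mul_sum]
  rw [integral_finsetSum _ fun i _ => integrableOn_exp_mul_one_sub_exp_pow hr i]
  refine Finset.sum_congr rfl fun i _ => ?_
  rw [integral_exp_mul_one_sub_exp_pow hr]
  field_simp

end MaxExpSurvival

theorem Finset.measurable_sup {α δ ι : Type*} [MeasurableSpace δ] [MeasurableSpace α]
    [SemilatticeSup α] [OrderBot α] [MeasurableSup₂ α] {s : Finset ι} {f : ι → δ → α}
    (hf : ∀ i ∈ s, Measurable (f i)) : Measurable fun x => s.sup fun i => f i x := by
  simp_rw [← Finset.sup_apply]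
  exact Finset.sup_induction measurable_const (fun _ hf _ hg => hf.sup hg) hf

section Geometric

variable {Ω : Type*} [MeasurableSpace Ω] {μ : Measure Ω}

lemma lintegral_natCast_eq_tsum_measure_lt {X : Ω → ℕ} (hX : Measurable X) :
    ∫⁻ ω, (X ω : ℝ≥0∞) ∂μ = ∑' k : ℕ, μ {ω | k < X ω} := by
  have hset (k : ℕ) : MeasurableSet {ω | k < X ω} := measurableSet_lt measurable_const hX
  have hcount (ω : Ω) : (X ω : ℝ≥0∞) = ∑' k : ℕ, {ω | k < X ω}.indicator 1 ω := by
    rw [tsum_eq_sum (s := Finset.range (X ω)) fun k hk => by simpa using hk]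
    simp only [indicator_apply, mem_ofPred_eq, Pi.one_apply, Finset.sum_boole]
    rw [Finset.filter_true_of_mem fun k hk => Finset.mem_range.1 hk, Finset.card_range]
  simp_rw [hcount]
  rw [lintegral_tsum fun k => (measurable_one.indicator (hset k)).aemeasurable]
  simp [lintegral_indicator_one (hset _)]

lemma integral_natCast_eq_tsum {X : Ω → ℕ} (hX : Measurable X) {p : ℕ → ℝ}
    (hp : ∀ k, μ {ω | k < X ω} = ENNReal.ofReal (p k)) (hp0 : ∀ k, 0 ≤ p k) (hsum : Summable p) :
    ∫ ω, (X ω : ℝ) ∂μ = ∑' k, p k := by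
  rw [integral_eq_lintegral_of_nonneg_ae (ae_of_all _ fun ω => Nat.cast_nonneg _)
    (measurable_from_top.comp hX).aestronglyMeasurable]
  simp_rw [ENNReal.ofReal_natCast]
  rw [lintegral_natCast_eq_tsum_measure_lt hX, tsum_congr hp,
    ← ENNReal.ofReal_tsum_of_nonneg hp0 hsum, ENNReal.toReal_ofReal (tsum_nonneg hp0)]

lemma measure_le_of_geometric {Y : Ω → ℕ} (hY : Measurable Y) {q : ℝ} (hq0 : 0 ≤ q)
    (hq1 : q ≤ 1) (hpmf : ∀ x, μ {ω | Y ω = x} = ENNReal.ofReal ((1 - q) * q ^ x)) (k : ℕ) :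
    μ {ω | Y ω ≤ k} = ENNReal.ofReal (1 - q ^ (k + 1)) := by
  have hset : {ω | Y ω ≤ k} = Y ⁻¹' ↑(Finset.range (k + 1)) := by
    ext ω; simp
  rw [hset, ← sum_measure_preimage_singleton _ fun x _ => hY (measurableSet_singleton x)]
  simp_rw [preimage, mem_singleton_iff, hpmf]
  rw [← ENNReal.ofReal_sum_of_nonneg fun x _ => mul_nonneg (sub_nonneg.2 hq1) (pow_nonneg hq0 x),
    ← Finset.mul_sum, mul_neg_geom_sum]

lemma ProbabilityTheory.iIndepFun.measure_sup_le_eq_prod {ι : Type*} [Fintype ι]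
    {Y : ι → Ω → ℕ} (hind : iIndepFun Y μ) (k : ℕ) :
    μ {ω | Finset.univ.sup (fun i => Y i ω) ≤ k} = ∏ i, μ {ω | Y i ω ≤ k} := by
  have hset : {ω | Finset.univ.sup (fun i => Y i ω) ≤ k} = ⋂ i ∈ Finset.univ, Y i ⁻¹' Iic k := by
    ext ω; simp
  rw [hset, hind.measure_inter_preimage_eq_mul _ fun _ _ => measurableSet_Iic]
  rfl

lemma measure_lt_sup_of_iid_geometric [IsProbabilityMeasure μ] {ι : Type*} [Fintype ι]
    {Y : ι → Ω → ℕ} (hmeas : ∀ i, Measurable (Y i)) (hind : iIndepFun Y μ) {q : ℝ} (hq0 : 0 ≤ q)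
    (hq1 : q ≤ 1) (hpmf : ∀ i x, μ {ω | Y i ω = x} = ENNReal.ofReal ((1 - q) * q ^ x)) (k : ℕ) :
    μ {ω | k < Finset.univ.sup (fun i => Y i ω)} =
      ENNReal.ofReal (1 - (1 - q ^ (k + 1)) ^ Fintype.card ι) := by
  have hle : MeasurableSet {ω | Finset.univ.sup (fun i => Y i ω) ≤ k} :=
    Finset.measurable_sup (fun i _ => hmeas i) measurableSet_Iic
  have hcompl : {ω | k < Finset.univ.sup (fun i => Y i ω)} =
      {ω | Finset.univ.sup (fun i => Y i ω) ≤ k}ᶜ := by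
    ext ω; simp
  have hq : 0 ≤ 1 - q ^ (k + 1) := sub_nonneg.2 (pow_le_one₀ hq0 hq1)
  rw [hcompl, prob_compl_eq_one_sub hle, hind.measure_sup_le_eq_prod,
    Finset.prod_congr rfl fun i _ => measure_le_of_geometric (hmeas i) hq0 hq1 (hpmf i) k,
    Finset.prod_const, Finset.card_univ, ← ENNReal.ofReal_pow hq, ← ENNReal.ofReal_one,
    ← ENNReal.ofReal_sub _ (pow_nonneg hq _)]

end Geometric

/-- Let `Y_1,...,Y_{n²}` be i.i.d. Geometric with mean `C` and `λ = log((1+C)/C)`. Then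
`(1/λ) H_{n²} - 1 < E[max_i Y_i] < (1/λ) H_{n²}`, where `H_m = ∑_{k=1}^m 1/k`. -/
theorem expected_max_of_iid_geometric {Ω : Type*} [MeasurableSpace Ω] (μ : Measure Ω)
    [IsProbabilityMeasure μ] (C n : ℕ) (hC : 2 ≤ C) (hn : 0 < n)
    (Y : Fin (n ^ 2) → Ω → ℕ)
    (hmeas : ∀ i, Measurable (Y i))
    (hind : iIndepFun Y μ)
    (hY : ∀ i, ∀ x : ℕ, μ {ω | Y i ω = x} =
      ENNReal.ofReal ((1 / (1 + (C : ℝ))) * ((C : ℝ) / (1 + (C : ℝ))) ^ x)) :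
    (1 / Real.log ((1 + (C : ℝ)) / (C : ℝ))) * (∑ k ∈ Finset.range (n ^ 2), (1 : ℝ) / (k + 1))
        - 1 < ∫ ω, ((Finset.univ.sup fun i => Y i ω : ℕ) : ℝ) ∂μ ∧
      ∫ ω, ((Finset.univ.sup fun i => Y i ω : ℕ) : ℝ) ∂μ <
        (1 / Real.log ((1 + (C : ℝ)) / (C : ℝ))) *
          (∑ k ∈ Finset.range (n ^ 2), (1 : ℝ) / (k + 1)) := by
  have hC0 : (0 : ℝ) < C := by exact_mod_cast (by omega : 0 < C)
  set r := Real.log ((1 + (C : ℝ)) / C)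
  have hr : 0 < r := Real.log_pos ((one_lt_div hC0).2 (by linarith))
  have hq : exp (-r) = C / (1 + C) := by
    rw [← Real.log_inv, exp_log (by positivity), inv_div]
  have hpmf (i : Fin (n ^ 2)) (x : ℕ) :
      μ {ω | Y i ω = x} = ENNReal.ofReal ((1 - exp (-r)) * exp (-r) ^ x) := by
    rw [hY, hq]
    congr 2
    field_simp
    ring
  have hN : n ^ 2 ≠ 0 := by positivity
  have anti := strictAntiOn_maxExpSurvival hr hN
  have cont := (continuous_maxExpSurvival (r := r) (N := n ^ 2)).continuousOn (s := Icc 0 1)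
  have integrable := integrableOn_maxExpSurvival (N := n ^ 2) hr
  have nonneg (t : ℝ) (ht : t ∈ Ioi 0) : 0 ≤ maxExpSurvival r (n ^ 2) t :=
    maxExpSurvival_nonneg hr.le ht.le
  have summable := anti.antitoneOn.summable_of_integrableOn_Ioi_zero integrable nonneg
  have hE : ∫ ω, ((Finset.univ.sup fun i => Y i ω : ℕ) : ℝ) ∂μ =
      ∑' k : ℕ, maxExpSurvival r (n ^ 2) (k + 1 : ℕ) := by
    refine integral_natCast_eq_tsum (Finset.measurable_sup fun i _ => hmeas i) (fun k => ?_)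
      (fun k => maxExpSurvival_nonneg hr.le (Nat.cast_nonneg _))
      ((summable_nat_add_iff 1).2 summable)
    rw [measure_lt_sup_of_iid_geometric hmeas hind (exp_pos _).le (exp_le_one_iff.2 (by linarith))
      hpmf, maxExpSurvival_natCast, Fintype.card_fin]
  have lower := anti.tsum_add_one_lt_integral cont integrable nonneg
  have upper := anti.integral_lt_tsum cont integrable nonneg
  rw [summable.tsum_eq_zero_add, Nat.cast_zero, maxExpSurvival_zero hN] at upper
  rw [hE, ← integral_maxExpSurvival hr]
  exact ⟨by linarith, lower⟩
end
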